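/- Let 0<q<1 and let m ≥ 2 be an integer. Then Σ ζ[s,t], summed over all pairs of integers s ≥ 2, t ≥ 2 with s + t = m + 1, equals ζ[m+1] − ζ[m,1]. -/

import Mathlib

/-- The `q`-analog of a natural number: `[k]_q = (1-q^k)/(1-q)`. -/
noncomputable def qnum (q : ℝ) (k : ℕ) : ℝ := (1 - q ^ k) / (1 - q)

/-- The single `q`-zeta value `ζ[n] = Σ_{k≥1} q^{(n-1)k}/[k]_q^n`. -/
noncomputable def qzeta (q : ℝ) (n : ℕ) : ℝ :=
  ∑' k : ℕ, q ^ ((n - 1) * (k + 1)) / (qnum q (k + 1)) ^ n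

/-- The double `q`-zeta value
`ζ[a,b] = Σ_{k₁>k₂>0} (q^{(a-1)k₁}/[k₁]_q^a)(q^{(b-1)k₂}/[k₂]_q^b)`. -/
noncomputable def qzeta2 (q : ℝ) (a b : ℕ) : ℝ :=
  ∑' p : {p : ℕ × ℕ // p.2 < p.1 ∧ 0 < p.2},
    (q ^ ((a - 1) * p.1.1) / (qnum q p.1.1) ^ a) *
      (q ^ ((b - 1) * p.1.2) / (qnum q p.1.2) ^ b)

/-!
For `k₁ = c + k > k₂ = k`, the summands of `ζ[s, m + 1 - s]` for `s = 2, …, m` form a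
geometric progression in `X = q^{k₁}/[k₁]` and `Y = q^k/[k]`. Since `[c + k] = [c] + q^c [k]`,
its sum collapses to `v(k) (1/[c] - 1/[c + k]) - v(c + k) q^c/[c]`, where `v(k) = q^{(m-1)k}/[k]^m`.
Summed over `c`, the first part telescopes to `v(k) H(k)` with `H(k) = Σ_{l ≤ k} q^l/[l]`
(as `1/[l] → 1 - q` and `1/[l] - (1 - q) = q^l/[l]`), while the second part, grouped by
`K = c + k`, is `Σ_K v(K) H(K - 1)`. The difference is `Σ_K v(K) q^K/[K] = ζ[m + 1]`,
and the term `s = m` is `ζ[m, 1]`.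
-/

open Finset Filter Topology

theorem Antitone.hasSum_sub_add {g : ℕ → ℝ} {L : ℝ} (hg : Antitone g)
    (hL : Tendsto g atTop (𝓝 L)) (k : ℕ) :
    HasSum (fun j ↦ g j - g (j + k)) (∑ l ∈ range k, (g l - L)) := by
  have partial_sum (N : ℕ) :
      ∑ j ∈ range N, (g j - g (j + k)) = ∑ l ∈ range k, (g l - g (N + l)) := by
    have h₁ := sum_range_add g k N
    have h₂ := sum_range_add g N k
    rw [add_comm k N] at h₁
    simp only [sum_sub_distrib, add_comm _ k] at h₁ h₂ ⊢
    linarith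
  rw [hasSum_iff_tendsto_nat_of_nonneg (fun j ↦ sub_nonneg.2 (hg (Nat.le_add_right j k)))]
  simp_rw [partial_sum]
  exact tendsto_finsetSum _ fun l _ ↦
    tendsto_const_nhds.sub (hL.comp (tendsto_add_atTop_nat l))

theorem Summable.tsum_prod_eq_tsum_sum_antidiagonal {α A : Type*} [AddCommMonoid A]
    [HasAntidiagonal A] [AddCommMonoid α] [TopologicalSpace α] [ContinuousAdd α] [T3Space α]
    {f : A × A → α} (hf : Summable f) :
    ∑' p, f p = ∑' n, ∑ p ∈ antidiagonal n, f p := by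
  let e := HasAntidiagonal.sigmaAntidiagonalEquivProd (A := A)
  rw [← e.tsum_eq f]
  refine ((e.summable_iff.2 hf).tsum_sigma' fun _ ↦ (hasSum_fintype _).summable).trans ?_
  refine tsum_congr fun n ↦ ?_
  rw [tsum_fintype (L := .unconditional _)]
  exact sum_finset_coe f _

theorem sum_Icc_two_pow_mul_pow_mul_sub {R : Type*} [CommRing R] (x y : R) (m : ℕ) :
    (∑ s ∈ Icc 2 m, x ^ (s - 1) * y ^ (m - s)) * (x - y) = x * (x ^ (m - 1) - y ^ (m - 1)) := by
  rcases Nat.lt_or_ge m 2 with hm | hm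
  · interval_cases m <;> simp
  rw [← Ico_add_one_right_eq_Icc, sum_Ico_eq_sum_range, ← geom_sum₂_mul, ← mul_assoc, mul_sum,
    show m + 1 - 2 = m - 1 by omega]
  congr 1
  refine sum_congr rfl fun i hi ↦ ?_
  rw [mem_range] at hi
  rw [show 2 + i - 1 = i + 1 by omega, show m - (2 + i) = m - 1 - 1 - i by omega, pow_succ]
  ring

theorem summable_of_nonneg_of_le_pow_add {r : ℝ} (hr0 : 0 ≤ r) (hr1 : r < 1) {f : ℕ × ℕ → ℝ}
    (hf0 : ∀ p, 0 ≤ f p) (hf : ∀ p, f p ≤ r ^ (p.1 + p.2)) : Summable f := by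
  have hgeom := summable_geometric_of_lt_one hr0 hr1
  refine .of_nonneg_of_le hf0 hf ?_
  simp_rw [pow_add]
  exact hgeom.mul_of_nonneg hgeom (fun _ ↦ pow_nonneg hr0 _) fun _ ↦ pow_nonneg hr0 _

theorem tsum_mul_sum_range_succ_sub_tsum {v h : ℕ → ℝ} (hv : ∀ n, 0 ≤ v n) (hh : ∀ n, 0 ≤ h n)
    (hs : Summable fun n ↦ v n * ∑ l ∈ range (n + 1), h l) :
    ∑' n, v n * ∑ l ∈ range (n + 1), h l - ∑' n, v (n + 1) * ∑ l ∈ range (n + 1), h l =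
      ∑' n, v n * h n := by
  have hH (n : ℕ) : 0 ≤ ∑ l ∈ range n, h l := sum_nonneg fun l _ ↦ hh l
  have hs₁ : Summable fun n ↦ v n * ∑ l ∈ range n, h l :=
    hs.of_nonneg_of_le (fun n ↦ mul_nonneg (hv n) (hH n)) fun n ↦
      mul_le_mul_of_nonneg_left (by rw [sum_range_succ]; linarith [hh n]) (hv n)
  have hs₂ : Summable fun n ↦ v n * h n :=
    hs.of_nonneg_of_le (fun n ↦ mul_nonneg (hv n) (hh n)) fun n ↦
      mul_le_mul_of_nonneg_left (by rw [sum_range_succ]; linarith [hH n]) (hv n)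
  have hshift := hs₁.tsum_eq_zero_add
  simp only [range_zero, sum_empty, mul_zero, zero_add] at hshift
  rw [← hshift]
  simp_rw [sum_range_succ, mul_add]
  rw [hs₁.tsum_add hs₂]
  ring

theorem qnum_add (q : ℝ) (m n : ℕ) : qnum q (m + n) = qnum q m + q ^ m * qnum q n := by
  rcases eq_or_ne q 1 with rfl | hq
  · simp [qnum]
  have : 1 - q ≠ 0 := sub_ne_zero.2 hq.symm
  simp only [qnum, pow_add]
  field_simp
  ring

section QNum

variable {q : ℝ}

theorem qnum_nonneg (hq0 : 0 ≤ q) (hq1 : q < 1) (k : ℕ) : 0 ≤ qnum q k :=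
  div_nonneg (sub_nonneg.2 (pow_le_one₀ hq0 hq1.le)) (sub_nonneg.2 hq1.le)

theorem one_le_qnum (hq0 : 0 ≤ q) (hq1 : q < 1) {k : ℕ} (hk : 1 ≤ k) : 1 ≤ qnum q k := by
  rw [qnum, one_le_div (sub_pos.2 hq1)]
  linarith [pow_le_of_le_one hq0 hq1.le (Nat.one_le_iff_ne_zero.1 hk)]

theorem qnum_pos (hq0 : 0 ≤ q) (hq1 : q < 1) {k : ℕ} (hk : 1 ≤ k) : 0 < qnum q k :=
  one_pos.trans_le (one_le_qnum hq0 hq1 hk)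

theorem qnum_le_qnum_add (hq0 : 0 ≤ q) (hq1 : q < 1) (m n : ℕ) : qnum q n ≤ qnum q (m + n) := by
  rw [add_comm, qnum_add]
  exact le_add_of_nonneg_right (mul_nonneg (pow_nonneg hq0 n) (qnum_nonneg hq0 hq1 m))

theorem tendsto_one_div_qnum (hq0 : 0 ≤ q) (hq1 : q < 1) :
    Tendsto (fun k ↦ 1 / qnum q k) atTop (𝓝 (1 - q)) := by
  simp only [qnum, one_div_div]
  simpa [div_eq_mul_inv] using
    (((tendsto_pow_atTop_nhds_zero_of_lt_one hq0 hq1).const_sub 1).inv₀ (by simp)).const_mul (1 - q)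

theorem pow_div_qnum (hq0 : 0 ≤ q) (hq1 : q < 1) {k : ℕ} (hk : 1 ≤ k) :
    q ^ k / qnum q k = 1 / qnum q k - (1 - q) := by
  have : 1 - q ^ k ≠ 0 := (sub_pos.2 (pow_lt_one₀ hq0 hq1 (by omega))).ne'
  have : 1 - q ≠ 0 := (sub_pos.2 hq1).ne'
  simp only [qnum]
  field_simp
  ring

theorem one_div_qnum_sub_one_div_qnum_add (hq0 : 0 ≤ q) (hq1 : q < 1) {c k : ℕ} (hc : 1 ≤ c) :
    1 / qnum q c - 1 / qnum q (c + k) = q ^ c * qnum q k / (qnum q c * qnum q (c + k)) := by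
  rw [div_sub_div _ _ (qnum_pos hq0 hq1 hc).ne' (qnum_pos hq0 hq1 (by omega)).ne', qnum_add]
  ring

end QNum

noncomputable def qzetaTerm (q : ℝ) (a k : ℕ) : ℝ := q ^ ((a - 1) * k) / qnum q k ^ a

theorem qzetaTerm_eq_pow_div (q : ℝ) {a : ℕ} (ha : 1 ≤ a) (k : ℕ) :
    qzetaTerm q a k = (q ^ k / qnum q k) ^ (a - 1) / qnum q k := by
  rw [qzetaTerm, div_pow, ← pow_mul, div_div, ← pow_succ, Nat.sub_add_cancel ha, mul_comm]

theorem qzetaTerm_succ (q : ℝ) {a : ℕ} (ha : 1 ≤ a) (k : ℕ) :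
    qzetaTerm q (a + 1) k = qzetaTerm q a k * (q ^ k / qnum q k) := by
  rw [qzetaTerm_eq_pow_div q ha, qzetaTerm_eq_pow_div q (by omega), Nat.add_sub_cancel,
    ← Nat.sub_add_cancel ha, pow_succ, Nat.add_sub_cancel]
  ring

section QZetaTerm

variable {q : ℝ}

theorem qzetaTerm_nonneg (hq0 : 0 ≤ q) (hq1 : q < 1) (a k : ℕ) : 0 ≤ qzetaTerm q a k :=
  div_nonneg (pow_nonneg hq0 _) (pow_nonneg (qnum_nonneg hq0 hq1 k) a)

theorem qzetaTerm_le_pow (hq0 : 0 ≤ q) (hq1 : q < 1) (a : ℕ) {k : ℕ} (hk : 1 ≤ k) :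
    qzetaTerm q a k ≤ q ^ ((a - 1) * k) :=
  div_le_self (pow_nonneg hq0 _) (one_le_pow₀ (one_le_qnum hq0 hq1 hk))

theorem sum_qzetaTerm_mul_qzetaTerm (hq0 : 0 < q) (hq1 : q < 1) {m c k : ℕ} (hm : 1 ≤ m)
    (hc : 1 ≤ c) (hk : 1 ≤ k) :
    ∑ s ∈ Icc 2 m, qzetaTerm q s (c + k) * qzetaTerm q (m + 1 - s) k =
      qzetaTerm q m k * (1 / qnum q c - 1 / qnum q (c + k)) -
        qzetaTerm q m (c + k) * (q ^ c / qnum q c) := by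
  have hA := (qnum_pos hq0.le hq1 hk).ne'
  have hB := (qnum_pos hq0.le hq1 (show 1 ≤ c + k by omega)).ne'
  have hD := (qnum_pos hq0.le hq1 hc).ne'
  set X := q ^ (c + k) / qnum q (c + k)
  set Y := q ^ k / qnum q k
  have hterm : ∀ s ∈ Icc 2 m, qzetaTerm q s (c + k) * qzetaTerm q (m + 1 - s) k =
      X ^ (s - 1) * Y ^ (m - s) / (qnum q (c + k) * qnum q k) := fun s hs ↦ by
    rw [mem_Icc] at hs
    rw [qzetaTerm_eq_pow_div q (by omega), qzetaTerm_eq_pow_div q (by omega),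
      show m + 1 - s - 1 = m - s by omega]
    ring
  have hXY : X - Y = -(q ^ k * qnum q c) / (qnum q (c + k) * qnum q k) := by
    rw [div_sub_div _ _ hB hA, qnum_add, pow_add]
    ring
  have hXY0 : X - Y ≠ 0 := by
    rw [hXY]
    exact div_ne_zero (neg_ne_zero.2 (mul_ne_zero (pow_ne_zero _ hq0.ne') hD)) (mul_ne_zero hB hA)
  rw [sum_congr rfl hterm, ← sum_div, eq_div_of_mul_eq hXY0 (sum_Icc_two_pow_mul_pow_mul_sub X Y m),
    qzetaTerm_eq_pow_div q hm, qzetaTerm_eq_pow_div q hm, hXY,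
    one_div_qnum_sub_one_div_qnum_add hq0.le hq1 hc]
  simp only [X, pow_add]
  field_simp
  ring

end QZetaTerm

/-- Encodes `k₁ > k₂ > 0` as `(k₂ - 1, k₁ - k₂ - 1)`. -/
def decreasingPairsEquiv : ℕ × ℕ ≃ {p : ℕ × ℕ // p.2 < p.1 ∧ 0 < p.2} where
  toFun p := ⟨(p.2 + 1 + (p.1 + 1), p.1 + 1), by omega, by omega⟩
  invFun p := (p.1.2 - 1, p.1.1 - p.1.2 - 1)
  left_inv p := by simp
  right_inv p := by
    obtain ⟨⟨k₁, k₂⟩, h₁, h₂⟩ := p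
    ext <;> simp <;> omega

theorem qzeta2_eq_tsum_prod (q : ℝ) (a b : ℕ) :
    qzeta2 q a b = ∑' p : ℕ × ℕ, qzetaTerm q a (p.2 + 1 + (p.1 + 1)) * qzetaTerm q b (p.1 + 1) :=
  (decreasingPairsEquiv.tsum_eq _).symm

section Summation

variable {q : ℝ}

theorem summable_qzetaTerm_mul_qzetaTerm (hq0 : 0 ≤ q) (hq1 : q < 1) {a : ℕ} (ha : 2 ≤ a)
    (b : ℕ) :
    Summable fun p : ℕ × ℕ ↦ qzetaTerm q a (p.2 + 1 + (p.1 + 1)) * qzetaTerm q b (p.1 + 1) := by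
  refine summable_of_nonneg_of_le_pow_add hq0 hq1
    (fun p ↦ mul_nonneg (qzetaTerm_nonneg hq0 hq1 _ _) (qzetaTerm_nonneg hq0 hq1 _ _)) fun p ↦ ?_
  calc _ ≤ q ^ ((a - 1) * (p.2 + 1 + (p.1 + 1))) * q ^ ((b - 1) * (p.1 + 1)) :=
        mul_le_mul (qzetaTerm_le_pow hq0 hq1 a (by omega)) (qzetaTerm_le_pow hq0 hq1 b (by omega))
          (qzetaTerm_nonneg hq0 hq1 _ _) (pow_nonneg hq0 _)
    _ ≤ q ^ (p.1 + p.2) * 1 := by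
        have := Nat.le_mul_of_pos_left (p.2 + 1 + (p.1 + 1)) (show 0 < a - 1 by omega)
        exact mul_le_mul (pow_le_pow_of_le_one hq0 hq1.le (by omega)) (pow_le_one₀ hq0 hq1.le)
          (pow_nonneg hq0 _) (pow_nonneg hq0 _)
    _ = q ^ (p.1 + p.2) := mul_one _

theorem hasSum_one_div_qnum_sub (hq0 : 0 ≤ q) (hq1 : q < 1) (k : ℕ) :
    HasSum (fun j ↦ 1 / qnum q (j + 1) - 1 / qnum q (j + 1 + k))
      (∑ l ∈ range k, q ^ (l + 1) / qnum q (l + 1)) := by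
  have hanti : Antitone fun j ↦ 1 / qnum q (j + 1) := fun i j hij ↦ by
    obtain ⟨d, rfl⟩ := Nat.exists_eq_add_of_le hij
    refine one_div_le_one_div_of_le (qnum_pos hq0 hq1 (by omega)) ?_
    exact (qnum_le_qnum_add hq0 hq1 d (i + 1)).trans_eq (congrArg _ (by omega))
  convert hanti.hasSum_sub_add ((tendsto_one_div_qnum hq0 hq1).comp (tendsto_add_atTop_nat 1)) k
    using 2 with j l
  · rw [add_right_comm]
  · exact pow_div_qnum hq0 hq1 (by omega)

theorem HasSum.qzetaTerm_mul_one_div_qnum_sub (hq0 : 0 ≤ q) (hq1 : q < 1) {m : ℕ} {x : ℝ}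
    (hx : HasSum (fun p : ℕ × ℕ ↦
      qzetaTerm q m (p.1 + 1) * (1 / qnum q (p.2 + 1) - 1 / qnum q (p.2 + 1 + (p.1 + 1)))) x) :
    HasSum (fun n ↦ qzetaTerm q m (n + 1) * ∑ l ∈ range (n + 1), q ^ (l + 1) / qnum q (l + 1)) x :=
  hx.prod_fiberwise fun n ↦ (hasSum_one_div_qnum_sub hq0 hq1 (n + 1)).mul_left _

theorem summable_qzetaTerm_mul_pow_div_qnum (hq0 : 0 ≤ q) (hq1 : q < 1) {m : ℕ} (hm : 2 ≤ m) :
    Summable fun p : ℕ × ℕ ↦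
      qzetaTerm q m (p.2 + 1 + (p.1 + 1)) * (q ^ (p.2 + 1) / qnum q (p.2 + 1)) := by
  have hh (l : ℕ) : q ^ (l + 1) / qnum q (l + 1) ≤ 1 :=
    div_le_one_of_le₀ ((pow_le_one₀ hq0 hq1.le).trans (one_le_qnum hq0 hq1 (by omega)))
      (qnum_nonneg hq0 hq1 _)
  refine summable_of_nonneg_of_le_pow_add hq0 hq1 (fun p ↦ mul_nonneg
    (qzetaTerm_nonneg hq0 hq1 _ _) (div_nonneg (pow_nonneg hq0 _) (qnum_nonneg hq0 hq1 _)))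
    fun p ↦ ?_
  calc _ ≤ q ^ ((m - 1) * (p.2 + 1 + (p.1 + 1))) * 1 :=
        mul_le_mul (qzetaTerm_le_pow hq0 hq1 m (by omega)) (hh _)
          (div_nonneg (pow_nonneg hq0 _) (qnum_nonneg hq0 hq1 _)) (pow_nonneg hq0 _)
    _ ≤ q ^ (p.1 + p.2) := by
        have := Nat.le_mul_of_pos_left (p.2 + 1 + (p.1 + 1)) (show 0 < m - 1 by omega)
        rw [mul_one]
        exact pow_le_pow_of_le_one hq0 hq1.le (by omega)

theorem tsum_qzetaTerm_mul_pow_div_qnum (hq0 : 0 ≤ q) (hq1 : q < 1) {m : ℕ} (hm : 2 ≤ m) :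
    ∑' p : ℕ × ℕ, qzetaTerm q m (p.2 + 1 + (p.1 + 1)) * (q ^ (p.2 + 1) / qnum q (p.2 + 1)) =
      ∑' n, qzetaTerm q m (n + 1 + 1) * ∑ l ∈ range (n + 1), q ^ (l + 1) / qnum q (l + 1) := by
  rw [(summable_qzetaTerm_mul_pow_div_qnum hq0 hq1 hm).tsum_prod_eq_tsum_sum_antidiagonal]
  refine tsum_congr fun n ↦ ?_
  rw [mul_sum, ← Nat.sum_antidiagonal_swap, Nat.sum_antidiagonal_eq_sum_range_succ_mk]
  refine sum_congr rfl fun l hl ↦ ?_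
  rw [mem_range] at hl
  simp only [Prod.fst_swap, Prod.snd_swap]
  congr 2
  omega

end Summation

theorem sum_Icc_qzeta2_eq_qzeta {q : ℝ} (hq0 : 0 < q) (hq1 : q < 1) {m : ℕ} (hm : 2 ≤ m) :
    ∑ s ∈ Icc 2 m, qzeta2 q s (m + 1 - s) = qzeta q (m + 1) := by
  have hterm (s : ℕ) (hs : s ∈ Icc 2 m) :=
    summable_qzetaTerm_mul_qzetaTerm hq0.le hq1 (mem_Icc.1 hs).1 (m + 1 - s)
  have hpair (p : ℕ × ℕ) := sum_qzetaTerm_mul_qzetaTerm hq0 hq1 (m := m) (c := p.2 + 1)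
    (k := p.1 + 1) (by omega) (by omega) (by omega)
  have hG := summable_qzetaTerm_mul_pow_div_qnum hq0.le hq1 hm
  have hF : Summable fun p : ℕ × ℕ ↦
      qzetaTerm q m (p.1 + 1) * (1 / qnum q (p.2 + 1) - 1 / qnum q (p.2 + 1 + (p.1 + 1))) :=
    ((summable_sum hterm).add hG).congr fun p ↦ by
      rw [hpair]
      ring
  have hFsum := hF.hasSum.qzetaTerm_mul_one_div_qnum_sub hq0.le hq1
  simp_rw [qzeta2_eq_tsum_prod]
  rw [← Summable.tsum_finsetSum hterm, tsum_congr hpair, hF.tsum_sub hG, ← hFsum.tsum_eq,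
    tsum_qzetaTerm_mul_pow_div_qnum hq0.le hq1 hm,
    tsum_mul_sum_range_succ_sub_tsum (fun n ↦ qzetaTerm_nonneg hq0.le hq1 m _)
      (fun l ↦ div_nonneg (pow_nonneg hq0.le _) (qnum_nonneg hq0.le hq1 _)) hFsum.summable]
  exact tsum_congr fun n ↦ (qzetaTerm_succ q (by omega) (n + 1)).symm

/-- Sum of double q-zeta values with both arguments at least 2 and weight m+1. -/
theorem qzeta2_weight_sum (q : ℝ) (hq0 : 0 < q) (hq1 : q < 1) (m : ℕ) (hm : 2 ≤ m) :
    (∑ s ∈ Finset.Icc 2 (m - 1), qzeta2 q s (m + 1 - s))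
      = qzeta q (m + 1) - qzeta2 q m 1 := by
  rw [← sum_Icc_qzeta2_eq_qzeta hq0 hq1 hm, ← Nat.sub_add_cancel (show 1 ≤ m by omega),
    sum_Icc_succ_top (by omega), Nat.sub_add_cancel (show 1 ≤ m by omega), Nat.add_sub_cancel_left]
  ring
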